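/- arXiv:2109.09242 — 7 statements merged into one kernel-verified Lean document; each statement's English description precedes it below -/
import Mathlib

section
/- The regions R_n converge to the singleton {ξ*} as n → ∞, where ξ* = (1, 0, -1, 0): for every ε > 0 there exists m ≥ 0 such that for all n > m, R_n is contained in the open Euclidean ball in ℝ⁴ of radius ε centred at ξ*. -/
noncomputable section

/-- The parameter region `Φ`: `τ_L > δ_L + 1`, `δ_L > 0`, `τ_R < -(δ_R + 1)`, `δ_R > 0`. -/
def PhiSet : Set (ℝ × ℝ × ℝ × ℝ) :=
  {ξ | ξ.1 > ξ.2.1 + 1 ∧ 0 < ξ.2.1 ∧ ξ.2.2.1 < -(ξ.2.2.2 + 1) ∧ 0 < ξ.2.2.2}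

/-- The function `φ` whose zero set bounds `Φ_BYG`. -/
def phiFn (ξ : ℝ × ℝ × ℝ × ℝ) : ℝ :=
  ξ.2.2.2 - (1 + ξ.2.2.1) * ξ.2.1
    + (1 / 2) * ((1 + ξ.2.2.1) * ξ.1 - ξ.2.2.1 - ξ.2.1 - ξ.2.2.2)
      * (ξ.1 + Real.sqrt (ξ.1 ^ 2 - 4 * ξ.2.1))

/-- The renormalisation operator `g`. -/
def gmap (ξ : ℝ × ℝ × ℝ × ℝ) : ℝ × ℝ × ℝ × ℝ :=
  (ξ.2.2.1 ^ 2 - 2 * ξ.2.2.2, ξ.2.2.2 ^ 2, ξ.1 * ξ.2.2.1 - ξ.2.1 - ξ.2.2.2, ξ.2.1 * ξ.2.2.2)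

/-- `ζ_n(ξ) = φ(gⁿ(ξ))`. -/
def zeta (n : ℕ) (ξ : ℝ × ℝ × ℝ × ℝ) : ℝ := phiFn (gmap^[n] ξ)

/-- The region `R_n = {ξ ∈ Φ | ζ_n(ξ) > 0 and ζ_{n+1}(ξ) ≤ 0}`. -/
def regionR (n : ℕ) : Set (ℝ × ℝ × ℝ × ℝ) :=
  {ξ ∈ PhiSet | 0 < zeta n ξ ∧ zeta (n + 1) ξ ≤ 0}

/-- Total slack functional: `w = (a-b-1) + 2(-c-d-1) + 2b + 2d = a + b - 2c - 3`. -/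
def wFn (ξ : ℝ × ℝ × ℝ × ℝ) : ℝ := ξ.1 + ξ.2.1 - 2 * ξ.2.2.1 - 3

lemma mem_phiSet_iff (a b c d : ℝ) :
    ((a, b, c, d) : ℝ × ℝ × ℝ × ℝ) ∈ PhiSet ↔
      a > b + 1 ∧ 0 < b ∧ c < -(d + 1) ∧ 0 < d := Iff.rfl

lemma gmap_mem {x : ℝ × ℝ × ℝ × ℝ} (hx : x ∈ PhiSet) : gmap x ∈ PhiSet := by
  obtain ⟨a, b, c, d⟩ := x
  obtain ⟨h1, h2, h3, h4⟩ := hx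
  dsimp only at h1 h2 h3 h4
  have hgm : gmap (a, b, c, d) = (c ^ 2 - 2 * d, d ^ 2, a * c - b - d, b * d) := rfl
  rw [hgm, mem_phiSet_iff]
  refine ⟨by nlinarith, by positivity, ?_, by positivity⟩
  nlinarith [mul_pos h2 h4, mul_pos (show (0:ℝ) < a - 1 by linarith) (show (0:ℝ) < -c - 1 by linarith)]

lemma iter_mem (k : ℕ) {x : ℝ × ℝ × ℝ × ℝ} (hx : x ∈ PhiSet) : gmap^[k] x ∈ PhiSet := by
  induction k with
  | zero => simpa using hx
  | succ n ih => rw [Function.iterate_succ_apply']; exact gmap_mem ih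

lemma wFn_pos {x : ℝ × ℝ × ℝ × ℝ} (hx : x ∈ PhiSet) : 0 < wFn x := by
  obtain ⟨a, b, c, d⟩ := x
  obtain ⟨h1, h2, h3, h4⟩ := hx
  dsimp only at h1 h2 h3 h4
  show 0 < a + b - 2 * c - 3
  linarith

lemma wFn_double {x : ℝ × ℝ × ℝ × ℝ} (hx : x ∈ PhiSet) : 2 * wFn x ≤ wFn (gmap x) := by
  obtain ⟨a, b, c, d⟩ := x
  obtain ⟨h1, h2, h3, h4⟩ := hx
  dsimp only at h1 h2 h3 h4
  show 2 * (a + b - 2 * c - 3) ≤ (c ^ 2 - 2 * d) + d ^ 2 - 2 * (a * c - b - d) - 3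
  nlinarith [mul_pos (show (0:ℝ) < -1 - c by linarith) (show (0:ℝ) < 2*a - c - 3 by linarith)]

lemma wFn_iter (k : ℕ) {x : ℝ × ℝ × ℝ × ℝ} (hx : x ∈ PhiSet) :
    2 ^ k * wFn x ≤ wFn (gmap^[k] x) := by
  induction k with
  | zero => simp
  | succ n ih =>
      rw [Function.iterate_succ_apply']
      have h2 := wFn_double (iter_mem n hx)
      calc 2 ^ (n+1) * wFn x = 2 * (2 ^ n * wFn x) := by ring
        _ ≤ 2 * wFn (gmap^[n] x) := by linarith
        _ ≤ _ := h2

/-- Key consequence of `φ(x) > 0` on `Φ`. -/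
lemma phi_pos_bounds (a b c d : ℝ) (h1 : a > b + 1) (h2 : 0 < b) (h3 : c < -(d+1))
    (h4 : 0 < d) (hphi : 0 < phiFn (a, b, c, d)) :
    (a - b - 1) * (-c - 1) < 1 ∧ b < 1 := by
  have hD : 0 < a ^ 2 - 4 * b := by
    nlinarith [mul_pos (show (0:ℝ) < a - b - 1 by linarith) (show (0:ℝ) < a + b + 1 by linarith),
      sq_nonneg (b - 1)]
  set r := Real.sqrt (a ^ 2 - 4 * b) with hr
  have hr2 : r ^ 2 = a ^ 2 - 4 * b := Real.sq_sqrt hD.le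
  have hrpos : 0 < r := Real.sqrt_pos.2 hD
  set l := (a + r) / 2 with hl
  have hid : phiFn (a, b, c, d) = (l - 1) * (c * l - d) + l * (l - b) := by
    show d - (1 + c) * b + (1 / 2) * ((1 + c) * a - c - b - d) * (a + r)
        = (l - 1) * (c * l - d) + l * (l - b)
    rw [hl]
    linear_combination (-(c + 1) / 4) * hr2
  -- l > 1
  have hl1 : 1 < l := by
    rcases le_or_gt a 2 with h | h
    · have : 2 - a < r := by nlinarith
      rw [hl]; linarith
    · rw [hl]; linarith
  -- l - 1 > a - b - 1
  have hle : a - b - 1 < l - 1 := by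
    rcases le_or_gt (a - 2*b) 0 with h | h
    · rw [hl]; linarith
    · have : a - 2*b < r := by nlinarith
      rw [hl]; linarith
  rw [hid] at hphi
  -- Step A : (l-1)*(-c) < l - b
  have hA : (l - 1) * (-c) < l - b := by
    have hld : 0 ≤ (l - 1) * d := by nlinarith
    nlinarith [hphi, hld, hl1]
  have hb1 : b < 1 := by
    nlinarith [mul_nonneg (show (0:ℝ) ≤ l - 1 by linarith) (show (0:ℝ) ≤ -c - 1 by linarith)]
  refine ⟨?_, hb1⟩
  have h5 : (l - 1) * (-c - 1) < 1 - b := by nlinarith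
  have h6 : (a - b - 1) * (-c - 1) ≤ (l - 1) * (-c - 1) := by
    have hcc : (0:ℝ) ≤ -c - 1 := by linarith
    nlinarith
  linarith

/-- If `z ∈ Φ` and `φ(g z) > 0` then the slack `s_z = -c-d-1` is less than 1. -/
lemma step2 (a b c d : ℝ) (hz : ((a, b, c, d) : ℝ × ℝ × ℝ × ℝ) ∈ PhiSet)
    (hphi : 0 < phiFn (gmap (a, b, c, d))) : -c - d - 1 < 1 := by
  obtain ⟨hz1, hz2, hz3, hz4⟩ := hz
  dsimp only at hz1 hz2 hz3 hz4
  have hgm : gmap (a, b, c, d) = (c ^ 2 - 2 * d, d ^ 2, a * c - b - d, b * d) := rfl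
  have huΦ := gmap_mem (x := (a,b,c,d)) ⟨hz1, hz2, hz3, hz4⟩
  rw [hgm, mem_phiSet_iff] at huΦ
  obtain ⟨hu1, hu2, hu3, hu4⟩ := huΦ
  rw [hgm] at hphi
  obtain ⟨hB1, -⟩ := phi_pos_bounds _ _ _ _ hu1 hu2 hu3 hu4 hphi
  -- hB1 : (c^2 - 2d - d^2 - 1) * (-(a*c - b - d) - 1) < 1
  have hs : 0 < -c - d - 1 := by linarith
  have hεu : 2 * (-c - d - 1) ≤ c ^ 2 - 2 * d - d ^ 2 - 1 := by
    nlinarith [mul_pos hs (show (0:ℝ) < -c - 1 + d by linarith)]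
  have hcu : -c - d - 1 ≤ -(a * c - b - d) - 1 := by
    nlinarith [mul_pos (show (0:ℝ) < a - 1 by linarith) (show (0:ℝ) < -c by linarith)]
  have hmul : 2 * (-c - d - 1) * (-c - d - 1) ≤
      (c ^ 2 - 2 * d - d ^ 2 - 1) * (-(a * c - b - d) - 1) :=
    mul_le_mul hεu hcu hs.le (by linarith)
  nlinarith [hmul, hB1, hs]

/-- If `y ∈ Φ` and `φ(g² y) > 0` then `w(y) < 3`. -/
lemma step3 (p q s t : ℝ) (hy : ((p, q, s, t) : ℝ × ℝ × ℝ × ℝ) ∈ PhiSet)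
    (hphi : 0 < phiFn (gmap (gmap (p, q, s, t)))) : wFn (p, q, s, t) < 3 := by
  obtain ⟨hy1, hy2, hy3, hy4⟩ := hy
  dsimp only at hy1 hy2 hy3 hy4
  have hgm : gmap (p, q, s, t) = (s ^ 2 - 2 * t, t ^ 2, p * s - q - t, q * t) := rfl
  have hzΦ := gmap_mem (x := (p,q,s,t)) ⟨hy1, hy2, hy3, hy4⟩
  rw [hgm] at hzΦ
  rw [hgm] at hphi
  have hsz1 := step2 _ _ _ _ hzΦ hphi
  -- hsz1 : -(p*s - q - t) - q*t - 1 < 1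
  have hR2 : (-s - t - 1) + (p - q - 1) + 2 * q + 2 * t ≤ -(p * s - q - t) - q * t - 1 := by
    nlinarith [mul_pos (show (0:ℝ) < p - 1 - q by linarith) (show (0:ℝ) < -s - 1 by linarith),
      mul_pos hy2 (show (0:ℝ) < -s - 1 - t by linarith)]
  have hsy : -s - t - 1 ≤ -(p * s - q - t) - q * t - 1 := by linarith
  show p + q - 2 * s - 3 < 3
  linarith

/-- Theorem 2.1 (part): the regions `R_n` converge to `{ξ*}` where `ξ* = (1,0,-1,0)`:
for every `ε > 0` there exists `m` such that for all `n > m`, `R_n` is contained in the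
open Euclidean ball of radius `ε` centred at `ξ*`. -/
theorem regions_converge_to_xiStar :
    ∀ ε : ℝ, 0 < ε → ∃ m : ℕ, ∀ n : ℕ, n > m → ∀ ξ ∈ regionR n,
      Real.sqrt ((ξ.1 - 1) ^ 2 + (ξ.2.1 - 0) ^ 2 + (ξ.2.2.1 - (-1)) ^ 2 + (ξ.2.2.2 - 0) ^ 2)
        < ε := by
  intro ε hε
  obtain ⟨k, hk⟩ := exists_pow_lt_of_lt_one (show (0:ℝ) < ε / 24 by positivity)
    (show (1:ℝ)/2 < 1 by norm_num)
  refine ⟨max 2 k, fun n hn ξ hξ => ?_⟩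
  obtain ⟨hΦ, hz, -⟩ := hξ
  have hn2 : 2 ≤ n := le_trans (le_max_left 2 k) hn.le
  have hnk : k ≤ n := le_trans (le_max_right 2 k) hn.le
  obtain ⟨p, q, s, t, hyeq⟩ : ∃ p q s t, gmap^[n-2] ξ = (p, q, s, t) :=
    ⟨_, _, _, _, rfl⟩
  have hyΦ : ((p, q, s, t) : ℝ × ℝ × ℝ × ℝ) ∈ PhiSet := hyeq ▸ iter_mem (n-2) hΦ
  have hiter : gmap^[n] ξ = gmap (gmap (p, q, s, t)) := by
    rw [show n = 2 + (n - 2) by omega, Function.iterate_add_apply, hyeq]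
    rfl
  have hphi : 0 < phiFn (gmap (gmap (p, q, s, t))) := by
    have hzz : zeta n ξ = phiFn (gmap (gmap (p, q, s, t))) := by rw [zeta, hiter]
    linarith [hz, hzz.le]
  have hwy : wFn (p, q, s, t) < 3 := step3 p q s t hyΦ hphi
  have hiterw := wFn_iter (n - 2) hΦ
  rw [hyeq] at hiterw
  have hw0pos : 0 < wFn ξ := wFn_pos hΦ
  have hpow : (0:ℝ) < 2 ^ (n - 2) := by positivity
  have hwx : wFn ξ < 3 / 2 ^ (n - 2) := by
    rw [lt_div_iff₀ hpow]
    calc wFn ξ * 2 ^ (n-2) = 2 ^ (n-2) * wFn ξ := by ring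
      _ ≤ wFn (p, q, s, t) := hiterw
      _ < 3 := hwy
  have hple : ((1:ℝ)/2) ^ n ≤ ((1:ℝ)/2) ^ k :=
    pow_le_pow_of_le_one (by norm_num) (by norm_num) hnk
  have hn' : (2:ℝ) ^ n = 4 * 2 ^ (n - 2) := by
    rw [show n = 2 + (n - 2) by omega, pow_add]
    norm_num
  have h3 : (3:ℝ) / 2 ^ (n - 2) = 12 * ((1:ℝ)/2) ^ n := by
    rw [div_pow, one_pow, hn']
    field_simp
    ring
  have hwxε : 2 * wFn ξ < ε := by
    have h12 : wFn ξ < 12 * ((1:ℝ)/2) ^ k := by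
      rw [h3] at hwx
      nlinarith [hple]
    nlinarith [hk]
  -- finish: each coordinate deviation is at most wFn ξ
  obtain ⟨A, B, C, D⟩ := ξ
  obtain ⟨hx1, hx2, hx3, hx4⟩ := hΦ
  dsimp only at hx1 hx2 hx3 hx4
  have hw : wFn (A, B, C, D) = A + B - 2 * C - 3 := rfl
  rw [hw] at hwxε hw0pos
  show Real.sqrt ((A - 1) ^ 2 + (B - 0) ^ 2 + (C - (-1)) ^ 2 + (D - 0) ^ 2) < ε
  rw [Real.sqrt_lt' hε]
  set W := A + B - 2 * C - 3 with hW
  have e1 : (A - 1) ^ 2 ≤ W ^ 2 := sq_le_sq' (by linarith) (by linarith)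
  have e2 : (B - 0) ^ 2 ≤ W ^ 2 := sq_le_sq' (by linarith) (by linarith)
  have e3 : (C - (-1)) ^ 2 ≤ W ^ 2 := sq_le_sq' (by linarith) (by linarith)
  have e4 : (D - 0) ^ 2 ≤ W ^ 2 := sq_le_sq' (by linarith) (by linarith)
  nlinarith [e1, e2, e3, e4, hwxε, hw0pos]

end
end

section
/- For any ξ ∈ Φ_BYG, the triangle Ω(ξ) is forward invariant: f_ξ(Ω(ξ)) ⊆ Ω(ξ). -/
noncomputable section

/-- The region `Φ_BYG = {ξ ∈ Φ | φ(ξ) > 0}`. -/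
def PhiBYG : Set (ℝ × ℝ × ℝ × ℝ) := {ξ ∈ PhiSet | 0 < phiFn ξ}

/-- The two-dimensional border-collision normal form `f_ξ`. -/
def fmap (ξ : ℝ × ℝ × ℝ × ℝ) (z : ℝ × ℝ) : ℝ × ℝ :=
  if z.1 ≤ 0 then (ξ.1 * z.1 + z.2 + 1, -(ξ.2.1 * z.1))
  else (ξ.2.2.1 * z.1 + z.2 + 1, -(ξ.2.2.2 * z.1))

/-- The unstable eigenvalue `λ_L^u` of `A_L`. -/
def lamLu (ξ : ℝ × ℝ × ℝ × ℝ) : ℝ := (ξ.1 + Real.sqrt (ξ.1 ^ 2 - 4 * ξ.2.1)) / 2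

/-- The stable eigenvalue `λ_L^s` of `A_L`. -/
def lamLs (ξ : ℝ × ℝ × ℝ × ℝ) : ℝ := (ξ.1 - Real.sqrt (ξ.1 ^ 2 - 4 * ξ.2.1)) / 2

/-- The fixed point `Y` of the left piece of `f_ξ`. -/
def fpY (ξ : ℝ × ℝ × ℝ × ℝ) : ℝ × ℝ :=
  (-1 / (ξ.1 - ξ.2.1 - 1), ξ.2.1 / (ξ.1 - ξ.2.1 - 1))

/-- The intersection point of the line through `p` with slope `sp`
and the line through `q` with slope `sq` (assuming `sp ≠ sq`). -/
def lineInter (p q : ℝ × ℝ) (sp sq : ℝ) : ℝ × ℝ :=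
  ((q.2 - p.2 + sp * p.1 - sq * q.1) / (sp - sq),
   p.2 + sp * ((q.2 - p.2 + sp * p.1 - sq * q.1) / (sp - sq) - p.1))

/-- The point `D`, the intersection of `E^u(Y)` with `y = 0`. -/
def ptD (ξ : ℝ × ℝ × ℝ × ℝ) : ℝ × ℝ := (1 / (1 - lamLs ξ), 0)

/-- The point `B`, the intersection of `E^u(Y)` (slope `λ_L^u - τ_L`) with the line
through `f_ξ(D)` parallel to `E^s(Y)` (slope `λ_L^s - τ_L`). -/
def ptB (ξ : ℝ × ℝ × ℝ × ℝ) : ℝ × ℝ :=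
  lineInter (fpY ξ) (fmap ξ (ptD ξ)) (lamLu ξ - ξ.1) (lamLs ξ - ξ.1)

/-- The closed triangle `Ω(ξ)` with vertices `D`, `f_ξ(D)`, `B`. -/
def OmegaSet (ξ : ℝ × ℝ × ℝ × ℝ) : Set (ℝ × ℝ) :=
  convexHull ℝ {ptD ξ, fmap ξ (ptD ξ), ptB ξ}

/-!
In affine coordinates `(r, s)` along `E^u(Y)` and `E^s(Y)`, normalised so that `D`, `f_ξ(D)`, `B`
become `(0, 0)`, `(1, 1)`, `(1, 0)`, the triangle `Ω(ξ)` is `0 ≤ s ≤ r ≤ 1`. Writing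
`L = λ_L^u`, `S = λ_L^s`, the left piece of `f_ξ` is diagonal in these coordinates,
`(r, s) ↦ (L r - const, S s)`, and the right piece is some other affine map. On the part of the
triangle with `x ≤ 0` the left piece keeps `S s ≤ r'` because `x ≤ 0` there, and `r' ≤ 1`
because its value at `r = 1` is `1 - φ(ξ) / (δ_R - τ_R L + L S)`; on the part with `x ≥ 0` the
right piece stays in the triangle by the sign conditions of `Φ` and `δ_R ≤ τ_R²`.
-/

open Set

section Triangle

variable {E : Type*} [AddCommGroup E] [Module ℝ E]

def stdTriangle : Set (ℝ × ℝ) := {p | 0 ≤ p.2 ∧ p.2 ≤ p.1 ∧ p.1 ≤ 1}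

lemma convex_stdTriangle : Convex ℝ stdTriangle := by
  rintro p ⟨hp0, hp1, hp2⟩ q ⟨hq0, hq1, hq2⟩ a b ha hb hab
  refine ⟨?_, ?_, ?_⟩ <;> simp only [Prod.fst_add, Prod.snd_add, Prod.smul_fst, Prod.smul_snd,
    smul_eq_mul] <;> nlinarith [mul_nonneg ha hp0, mul_nonneg hb hq0]

/-- The affine map sending `(0, 0)`, `(1, 1)`, `(1, 0)` to `P`, `Q`, `R`. -/
def triangleChart (P Q R : E) (p : ℝ × ℝ) : E := P + p.1 • (R - P) + p.2 • (Q - R)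

lemma convexHull_triple_eq_image_triangleChart (P Q R : E) :
    convexHull ℝ {P, Q, R} = triangleChart P Q R '' stdTriangle := by
  apply Subset.antisymm
  · refine convexHull_min ?_ ?_
    · rintro _ (rfl | rfl | rfl)
      · exact ⟨(0, 0), by norm_num [stdTriangle], by simp [triangleChart]⟩
      · exact ⟨(1, 1), by norm_num [stdTriangle], by simp [triangleChart]⟩
      · exact ⟨(1, 0), by norm_num [stdTriangle], by simp [triangleChart]⟩
    · let chart : ℝ × ℝ →ᵃ[ℝ] E :=
        ⟨triangleChart P Q R, (LinearMap.fst ℝ ℝ ℝ).smulRight (R - P) +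
          (LinearMap.snd ℝ ℝ ℝ).smulRight (Q - R), fun p v => by
            simp only [triangleChart, vadd_eq_add, LinearMap.add_apply,
              LinearMap.smulRight_apply, LinearMap.fst_apply, LinearMap.snd_apply,
              Prod.fst_add, Prod.snd_add]
            module⟩
      exact convex_stdTriangle.affine_image chart
  · rintro _ ⟨p, ⟨hp0, hp1, hp2⟩, rfl⟩
    have hcomb :
        triangleChart P Q R p = ∑ i : Fin 3, ![1 - p.1, p.2, p.1 - p.2] i • ![P, Q, R] i := by
      simp only [triangleChart, Fin.sum_univ_three, Matrix.cons_val_zero, Matrix.cons_val_one,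
        Matrix.cons_val_two, Matrix.head_cons, Matrix.tail_cons]
      module
    rw [hcomb]
    refine (convex_convexHull ℝ _).sum_mem ?_ ?_ ?_
    · intro i _
      fin_cases i <;> simp only [Fin.zero_eta, Fin.mk_one, Fin.reduceFinMk, Matrix.cons_val,
        Matrix.cons_val_zero, Matrix.cons_val_one, sub_nonneg] <;> assumption
    · simp [Fin.sum_univ_three]
    · intro i _
      apply subset_convexHull
      fin_cases i <;> simp

end Triangle

section Eigenvalues

variable {L S : ℝ} (c e : ℝ)

lemma sqrt_discrim_add_mul (h : S ≤ L) : Real.sqrt ((L + S) ^ 2 - 4 * (L * S)) = L - S := by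
  rw [show (L + S) ^ 2 - 4 * (L * S) = (L - S) ^ 2 by ring, Real.sqrt_sq (sub_nonneg.2 h)]

lemma lamLu_add_mul (h : S ≤ L) : lamLu (L + S, L * S, c, e) = L := by
  simp only [lamLu, sqrt_discrim_add_mul h]; ring

lemma lamLs_add_mul (h : S ≤ L) : lamLs (L + S, L * S, c, e) = S := by
  simp only [lamLs, sqrt_discrim_add_mul h]; ring

lemma phiFn_add_mul (h : S ≤ L) :
    phiFn (L + S, L * S, c, e) = L ^ 2 * (1 - S) - (L - 1) * (e - c * L) := by
  simp only [phiFn, sqrt_discrim_add_mul h]; ring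

end Eigenvalues

/-- `1` lies strictly between the roots of `λ² - τλ + δ`, whose value `1 - τ + δ` there is
negative. -/
lemma exists_eigenvalues_of_saddle {τ δ : ℝ} (hτ : δ + 1 < τ) (hδ : 0 < δ) :
    ∃ L S : ℝ, 0 < S ∧ S < 1 ∧ 1 < L ∧ τ = L + S ∧ δ = L * S := by
  have hdiscr : 0 < τ ^ 2 - 4 * δ := by nlinarith [sq_nonneg (δ - 1)]
  set r := Real.sqrt (τ ^ 2 - 4 * δ)
  have hr : r ^ 2 = τ ^ 2 - 4 * δ := Real.sq_sqrt hdiscr.le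
  have hr0 : 0 < r := Real.sqrt_pos.2 hdiscr
  have hprod : (τ + r) / 2 * ((τ - r) / 2) = δ := by linear_combination -hr / 4
  have hcross : (1 - (τ + r) / 2) * (1 - (τ - r) / 2) < 0 := by nlinarith
  refine ⟨(τ + r) / 2, (τ - r) / 2, ?_, ?_, ?_, by ring, hprod.symm⟩ <;>
    nlinarith [mul_pos_iff.1 (hprod ▸ hδ), mul_neg_iff.1 hcross]

section Omega

variable {L S c e : ℝ}

lemma ptD_add_mul (hSL : S ≤ L) : ptD (L + S, L * S, c, e) = (1 / (1 - S), 0) := by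
  rw [ptD, lamLs_add_mul c e hSL]

lemma fmap_ptD_add_mul (hS1 : S < 1) (hSL : S ≤ L) :
    fmap (L + S, L * S, c, e) (ptD (L + S, L * S, c, e)) =
      ((c + 1 - S) / (1 - S), -(e / (1 - S))) := by
  have hD : ¬ 1 / (1 - S) ≤ 0 := not_le.2 (one_div_pos.2 (sub_pos.2 hS1))
  rw [ptD_add_mul hSL, fmap, if_neg hD]
  have h1S : 1 - S ≠ 0 := (sub_pos.2 hS1).ne'
  ext
  · field_simp
    ring
  · ring

lemma ptB_add_mul (hS1 : S < 1) (hSL : S < L) (hL1 : 1 < L) :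
    ptB (L + S, L * S, c, e) =
      (-((S + e - L * (1 + c - S)) / ((L - S) * (1 - S))),
        S * (e - c * L + L * S) / ((L - S) * (1 - S))) := by
  have h1S : 1 - S ≠ 0 := (sub_pos.2 hS1).ne'
  have hLS : L - S ≠ 0 := (sub_pos.2 hSL).ne'
  have hL1' : L - 1 ≠ 0 := (sub_pos.2 hL1).ne'
  simp only [ptB, lineInter, fpY, fmap_ptD_add_mul hS1 hSL.le, lamLu_add_mul c e hSL.le,
    lamLs_add_mul c e hSL.le]
  rw [show L - (L + S) - (S - (L + S)) = L - S by ring,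
    show L + S - L * S - 1 = (L - 1) * (1 - S) by ring]
  ext <;> dsimp only <;> field_simp <;> ring

def omegaChart (L S c e : ℝ) (p : ℝ × ℝ) : ℝ × ℝ :=
  ((L - S - (e - c * L + L * S) * p.1 + (e - c * S + S ^ 2) * p.2) / ((1 - S) * (L - S)),
    (S * (e - c * L + L * S) * p.1 - L * (e - c * S + S ^ 2) * p.2) / ((1 - S) * (L - S)))

lemma triangleChart_eq_omegaChart (hS1 : S < 1) (hSL : S < L) (hL1 : 1 < L) :
    triangleChart (ptD (L + S, L * S, c, e)) (fmap (L + S, L * S, c, e) (ptD (L + S, L * S, c, e)))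
      (ptB (L + S, L * S, c, e)) = omegaChart L S c e := by
  have h1S : 1 - S ≠ 0 := (sub_pos.2 hS1).ne'
  have hLS : L - S ≠ 0 := (sub_pos.2 hSL).ne'
  funext p
  rw [triangleChart, fmap_ptD_add_mul hS1 hSL.le, ptB_add_mul hS1 hSL hL1, ptD_add_mul hSL.le,
    omegaChart]
  ext <;> simp only [Prod.fst_add, Prod.snd_add, Prod.smul_fst, Prod.smul_snd, Prod.fst_sub,
    Prod.snd_sub, smul_eq_mul] <;> field_simp <;> ring

end Omega

section Dynamics

variable {L S c e : ℝ}

lemma one_sub_mul_omegaChart_fst (hS1 : S ≠ 1) (hSL : L ≠ S) (p : ℝ × ℝ) :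
    (1 - S) * (omegaChart L S c e p).1 =
      1 - ((e - c * L + L * S) * p.1 - (e - c * S + S ^ 2) * p.2) / (L - S) := by
  have h1S : 1 - S ≠ 0 := sub_ne_zero.2 hS1.symm
  have hLS : L - S ≠ 0 := sub_ne_zero.2 hSL
  simp only [omegaChart]
  field_simp
  ring

def leftCoordMap (L S c e : ℝ) (p : ℝ × ℝ) : ℝ × ℝ :=
  (L * p.1 - L * (L - S) / (e - c * L + L * S), S * p.2)

def rightCoordMap (L S c e : ℝ) (p : ℝ × ℝ) : ℝ × ℝ :=
  ((1 - S) * (omegaChart L S c e p).1 + (S + e * (L - S) / (e - c * L + L * S)) * p.2,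
    (1 - S) * (omegaChart L S c e p).1 + S * p.2)

lemma fmap_omegaChart_of_nonpos (hS1 : S ≠ 1) (hSL : L ≠ S) (hF : e - c * L + L * S ≠ 0)
    {p : ℝ × ℝ} (hx : (omegaChart L S c e p).1 ≤ 0) :
    fmap (L + S, L * S, c, e) (omegaChart L S c e p) =
      omegaChart L S c e (leftCoordMap L S c e p) := by
  have h1S : 1 - S ≠ 0 := sub_ne_zero.2 hS1.symm
  have hLS : L - S ≠ 0 := sub_ne_zero.2 hSL
  rw [fmap, if_pos hx]
  ext <;> simp only [omegaChart, leftCoordMap] <;>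
    generalize hF2 : e - c * L + L * S = F at hF ⊢ <;> field_simp <;> subst hF2 <;> ring

lemma fmap_omegaChart_of_pos (hS1 : S ≠ 1) (hSL : L ≠ S) (hF : e - c * L + L * S ≠ 0)
    {p : ℝ × ℝ} (hx : 0 < (omegaChart L S c e p).1) :
    fmap (L + S, L * S, c, e) (omegaChart L S c e p) =
      omegaChart L S c e (rightCoordMap L S c e p) := by
  have h1S : 1 - S ≠ 0 := sub_ne_zero.2 hS1.symm
  have hLS : L - S ≠ 0 := sub_ne_zero.2 hSL
  rw [fmap, if_neg (not_le.2 hx)]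
  ext <;> simp only [omegaChart, rightCoordMap] <;>
    generalize hF2 : e - c * L + L * S = F at hF ⊢ <;> field_simp <;> subst hF2 <;> ring

end Dynamics

section Invariance

variable {L S c e : ℝ}

lemma leftCoordMap_mem_stdTriangle (hS0 : 0 ≤ S) (hS1 : S < 1) (hSL : S < L) (he : 0 ≤ e)
    (hF : 0 < e - c * L + L * S) (hφ : 0 ≤ L ^ 2 * (1 - S) - (L - 1) * (e - c * L))
    {p : ℝ × ℝ} (hp : p ∈ stdTriangle) (hx : (omegaChart L S c e p).1 ≤ 0) :
    leftCoordMap L S c e p ∈ stdTriangle := by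
  obtain ⟨hs, hsr, hr⟩ := hp
  have hLS : 0 < L - S := sub_pos.2 hSL
  have hX : L - S ≤ (e - c * L + L * S) * p.1 - (e - c * S + S ^ 2) * p.2 := by
    have hsign := mul_nonpos_of_nonneg_of_nonpos (sub_pos.2 hS1).le hx
    rw [one_sub_mul_omegaChart_fst hS1.ne hSL.ne', sub_nonpos] at hsign
    simpa only [one_mul] using (le_div_iff₀ hLS).1 hsign
  set F := e - c * L + L * S with hFdef
  refine ⟨mul_nonneg hS0 hs, ?_, ?_⟩
  · have hid : L * p.1 - L * (L - S) / F - S * p.2 =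
        (L * (F * p.1 - (e - c * S + S ^ 2) * p.2 - (L - S)) + e * (L - S) * p.2) / F := by
      field_simp
      rw [hFdef]
      ring
    refine sub_nonneg.1 (hid ▸ div_nonneg (add_nonneg ?_ ?_) hF.le)
    · exact mul_nonneg (by linarith) (by linarith)
    · positivity
  · have hid : 1 - (L * p.1 - L * (L - S) / F) =
        L * (1 - p.1) + (L ^ 2 * (1 - S) - (L - 1) * (e - c * L)) / F := by
      field_simp
      rw [hFdef]
      ring
    refine sub_nonneg.1 (hid ▸ add_nonneg ?_ (div_nonneg hφ hF.le))
    exact mul_nonneg (by linarith) (by linarith)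

lemma rightCoordMap_mem_stdTriangle (hS0 : 0 ≤ S) (hS1 : S < 1) (hSL : S < L) (hc : c ≤ 0)
    (he : 0 ≤ e) (hce : e ≤ c ^ 2) (hF : 0 < e - c * L + L * S)
    {p : ℝ × ℝ} (hp : p ∈ stdTriangle) (hx : 0 ≤ (omegaChart L S c e p).1) :
    rightCoordMap L S c e p ∈ stdTriangle := by
  obtain ⟨hs, hsr, hr⟩ := hp
  have hLS : 0 < L - S := sub_pos.2 hSL
  have hX : 0 ≤ (1 - S) * (omegaChart L S c e p).1 := mul_nonneg (sub_pos.2 hS1).le hx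
  set F := e - c * L + L * S with hFdef
  refine ⟨add_nonneg hX (mul_nonneg hS0 hs), ?_, ?_⟩
  · simp only [rightCoordMap, ← hFdef]
    rw [add_mul, ← add_assoc, le_add_iff_nonneg_right]
    positivity
  · have hid : 1 - ((1 - S) * (omegaChart L S c e p).1 + (S + e * (L - S) / F) * p.2) =
        p.2 * (L * (c ^ 2 - e) - c * e - L * S * c + e * S) / F + (p.1 - p.2) * F / (L - S) := by
      rw [one_sub_mul_omegaChart_fst hS1.ne hSL.ne']
      field_simp
      rw [hFdef]
      ring
    refine sub_nonneg.1 (hid ▸ add_nonneg (div_nonneg (mul_nonneg hs ?_) hF.le) ?_)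
    · have hL : 0 ≤ L := by linarith
      nlinarith [mul_nonneg hL (sub_nonneg.2 hce), mul_nonneg he (neg_nonneg.2 hc),
        mul_nonneg (mul_nonneg hL hS0) (neg_nonneg.2 hc), mul_nonneg he hS0]
    · exact div_nonneg (mul_nonneg (by linarith) hF.le) hLS.le

end Invariance

/-- Proposition 3.1: for any `ξ ∈ Φ_BYG`, the triangle `Ω(ξ)` is forward
invariant: `f_ξ(Ω(ξ)) ⊆ Ω(ξ)`. -/
theorem Omega_forward_invariant (ξ : ℝ × ℝ × ℝ × ℝ) (hξ : ξ ∈ PhiBYG) :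
    fmap ξ '' OmegaSet ξ ⊆ OmegaSet ξ := by
  obtain ⟨τ, δ, c, e⟩ := ξ
  obtain ⟨⟨hτ, hδ, hc, he⟩, hφ⟩ := hξ
  obtain ⟨L, S, hS0, hS1, hL1, rfl, rfl⟩ := exists_eigenvalues_of_saddle hτ hδ
  have hSL : S < L := by linarith
  rw [phiFn_add_mul c e hSL.le] at hφ
  have hF : 0 < e - c * L + L * S := by nlinarith
  have hce : e ≤ c ^ 2 := by nlinarith
  rintro _ ⟨z, hz, rfl⟩
  rw [OmegaSet, convexHull_triple_eq_image_triangleChart, triangleChart_eq_omegaChart hS1 hSL hL1]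
    at hz ⊢
  obtain ⟨p, hp, rfl⟩ := hz
  rcases le_or_gt (omegaChart L S c e p).1 0 with hx | hx
  · rw [fmap_omegaChart_of_nonpos hS1.ne hSL.ne' hF.ne' hx]
    exact mem_image_of_mem _
      (leftCoordMap_mem_stdTriangle hS0.le hS1 hSL he.le hF hφ.le hp hx)
  · rw [fmap_omegaChart_of_pos hS1.ne hSL.ne' hF.ne' hx]
    exact mem_image_of_mem _
      (rightCoordMap_mem_stdTriangle hS0.le hS1 hSL (by linarith) he.le hce hF hp hx.le)
end
end

section
/- For any ξ ∈ Φ_BYG, the fixed point X = (-1/(τ_R - δ_R - 1), δ_R/(τ_R - δ_R - 1)) belongs to the triangle Ω(ξ). (This is the key step in the paper's proof that the closure of the unstable manifold of X is contained in Ω(ξ).) -/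
/-!
Write `τ_L = u + s`, `δ_L = u s` with `0 < s < 1 < u` the eigenvalues of `A_L`. Then `D`,
`f_ξ(D)`, `B` and `X` have explicit rational coordinates in `u, s, τ_R, δ_R`, and with
`R = 1 + δ_R - τ_R > 0` and `E = δ_R + u s - u τ_R > 0` the point `X` is the convex combination
of `D`, `f_ξ(D)`, `B` with weights `((δ_R - τ_R) E - δ_R (u - s), E, δ_R (u - s)) / (R E)`.
The first weight is nonnegative because `-τ_R > 1` gives `δ_R ≤ (δ_R - τ_R)(-τ_R)`.
-/

noncomputable section

/-- The fixed point `X` of the right piece of `f_ξ`. -/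
def fpX (ξ : ℝ × ℝ × ℝ × ℝ) : ℝ × ℝ :=
  (-1 / (ξ.2.2.1 - ξ.2.2.2 - 1), ξ.2.2.2 / (ξ.2.2.1 - ξ.2.2.2 - 1))

lemma smul_add_smul_add_smul_mem_convexHull {𝕜 E : Type*} [Field 𝕜] [LinearOrder 𝕜]
    [IsStrictOrderedRing 𝕜] [AddCommGroup E] [Module 𝕜 E] {x y z : E} {a b c : 𝕜}
    (ha : 0 ≤ a) (hb : 0 ≤ b) (hc : 0 ≤ c) (habc : a + b + c = 1) :
    a • x + b • y + c • z ∈ convexHull 𝕜 {x, y, z} := by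
  simpa [Fin.sum_univ_three] using (convex_convexHull 𝕜 {x, y, z}).sum_mem
    (t := Finset.univ) (w := ![a, b, c]) (z := ![x, y, z])
    (by intro i _; fin_cases i <;> assumption)
    (by simpa [Fin.sum_univ_three] using habc)
    (by intro i _; fin_cases i <;> exact subset_convexHull 𝕜 _ (by simp))

lemma lineInter_eq_of_mem {p q r : ℝ × ℝ} {sp sq : ℝ} (hs : sp ≠ sq)
    (hp : r.2 - p.2 = sp * (r.1 - p.1)) (hq : r.2 - q.2 = sq * (r.1 - q.1)) :
    lineInter p q sp sq = r := by
  have hx : (q.2 - p.2 + sp * p.1 - sq * q.1) / (sp - sq) = r.1 := by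
    rw [div_eq_iff (sub_ne_zero.mpr hs)]
    linear_combination hp - hq
  refine Prod.ext hx ?_
  simp only [lineInter, hx]
  linear_combination -hp

def ofEigenvalues (u s T d : ℝ) : ℝ × ℝ × ℝ × ℝ := (u + s, u * s, T, d)

lemma exists_eq_ofEigenvalues {ξ : ℝ × ℝ × ℝ × ℝ} (hξ : ξ ∈ PhiSet) :
    ∃ u s, 0 < s ∧ s < 1 ∧ 1 < u ∧ ξ = ofEigenvalues u s ξ.2.2.1 ξ.2.2.2 := by
  obtain ⟨tL, dL, tR, dR⟩ := ξ
  obtain ⟨htL, hdL, -, -⟩ := hξ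
  simp only at htL hdL
  have hdisc : 0 < tL ^ 2 - 4 * dL := by nlinarith [sq_nonneg (dL - 1)]
  set r := Real.sqrt (tL ^ 2 - 4 * dL)
  have hr2 : r ^ 2 = tL ^ 2 - 4 * dL := Real.sq_sqrt hdisc.le
  have hr0 : 0 < r := Real.sqrt_pos.mpr hdisc
  refine ⟨(tL + r) / 2, (tL - r) / 2, by nlinarith, by nlinarith, by nlinarith, ?_⟩
  simp only [ofEigenvalues]
  exact Prod.ext (by ring) (Prod.ext (by linear_combination (1 / 4 : ℝ) * hr2) rfl)

section

variable {u s T d : ℝ}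

lemma sqrt_discr_ofEigenvalues (hsu : s ≤ u) :
    Real.sqrt ((u + s) ^ 2 - 4 * (u * s)) = u - s := by
  rw [show (u + s) ^ 2 - 4 * (u * s) = (u - s) ^ 2 by ring, Real.sqrt_sq (by linarith)]

lemma lamLu_ofEigenvalues (hsu : s ≤ u) : lamLu (ofEigenvalues u s T d) = u := by
  simp only [lamLu, ofEigenvalues, sqrt_discr_ofEigenvalues hsu]; ring

lemma lamLs_ofEigenvalues (hsu : s ≤ u) : lamLs (ofEigenvalues u s T d) = s := by
  simp only [lamLs, ofEigenvalues, sqrt_discr_ofEigenvalues hsu]; ring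

lemma ptD_ofEigenvalues (hsu : s ≤ u) : ptD (ofEigenvalues u s T d) = (1 / (1 - s), 0) := by
  rw [ptD, lamLs_ofEigenvalues hsu]

lemma fmap_ptD_ofEigenvalues (hs : s < 1) (hsu : s ≤ u) :
    fmap (ofEigenvalues u s T d) (ptD (ofEigenvalues u s T d))
      = ((T + 1 - s) / (1 - s), -d / (1 - s)) := by
  have hD : (0 : ℝ) < 1 / (1 - s) := by simpa using hs
  rw [ptD_ofEigenvalues hsu, fmap, if_neg hD.not_ge]
  have h1s : 1 - s ≠ 0 := by linarith
  simp only [ofEigenvalues, Prod.mk.injEq]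
  constructor
  · field_simp
    ring
  · field_simp

lemma fpY_ofEigenvalues :
    fpY (ofEigenvalues u s T d) = (-1 / ((u - 1) * (1 - s)), u * s / ((u - 1) * (1 - s))) := by
  simp only [fpY, ofEigenvalues, show u + s - u * s - 1 = (u - 1) * (1 - s) by ring]

lemma ptB_ofEigenvalues (hs : s < 1) (hu : 1 < u) :
    ptB (ofEigenvalues u s T d)
      = ((u - s - (d + u * s - u * T)) / ((1 - s) * (u - s)),
         s * (d + u * s - u * T) / ((1 - s) * (u - s))) := by
  have hsu : s ≤ u := by linarith
  have h1s : 1 - s ≠ 0 := by linarith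
  have hus : u - s ≠ 0 := by linarith
  have hu1 : u - 1 ≠ 0 := by linarith
  rw [ptB, fmap_ptD_ofEigenvalues hs hsu, lamLu_ofEigenvalues hsu, lamLs_ofEigenvalues hsu]
  apply lineInter_eq_of_mem (by simp only [ofEigenvalues]; linarith)
  · rw [fpY_ofEigenvalues]
    simp only [ofEigenvalues]
    field_simp
    ring
  · simp only [ofEigenvalues]
    field_simp
    ring

-- Stated for an arbitrary `E`; it is applied with `E = d + u s - u T`.
lemma fixedPoint_mem_convexHull_triangle {E : ℝ} (hs : s < 1) (hsu : s < u) (hd : 0 ≤ d)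
    (hT : T < 1 + d) (hE : 0 < E) (hN : d * (u - s) ≤ (d - T) * E) :
    ((-1 / (T - d - 1), d / (T - d - 1)) : ℝ × ℝ) ∈ convexHull ℝ
      {(1 / (1 - s), 0), ((T + 1 - s) / (1 - s), -d / (1 - s)),
        ((u - s - E) / ((1 - s) * (u - s)), s * E / ((1 - s) * (u - s)))} := by
  have h1s : 0 < 1 - s := by linarith
  have hus : 0 < u - s := by linarith
  have hR : 0 < 1 + d - T := by linarith
  have hX : T - d - 1 ≠ 0 := by linarith
  have hR' := hR.ne'
  have hE' := hE.ne'
  have ha : 0 ≤ ((d - T) * E - d * (u - s)) / ((1 + d - T) * E) :=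
    div_nonneg (by linarith) (by positivity)
  have hb : 0 ≤ 1 / (1 + d - T) := by positivity
  have hc : 0 ≤ d * (u - s) / ((1 + d - T) * E) := by positivity
  convert smul_add_smul_add_smul_mem_convexHull ha hb hc ?_ using 1
  · simp only [Prod.smul_mk, Prod.mk_add_mk, smul_eq_mul, Prod.mk.injEq]
    constructor
    · field_simp
      ring
    · field_simp
      ring
  · field_simp
    ring

lemma fpX_mem_OmegaSet_ofEigenvalues (hs0 : 0 ≤ s) (hs1 : s < 1) (hu : 1 < u)
    (hT : T < -(d + 1)) (hd : 0 ≤ d) :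
    fpX (ofEigenvalues u s T d) ∈ OmegaSet (ofEigenvalues u s T d) := by
  have hsu : s < u := by linarith
  have hE : 0 < d + u * s - u * T := by nlinarith
  have hN : d * (u - s) ≤ (d - T) * (d + u * s - u * T) := by
    have hu0 : 0 ≤ u := by linarith
    have hdT : 0 ≤ d - T := by linarith
    have hd_le : d ≤ (d - T) * (-T) := by nlinarith
    nlinarith [mul_nonneg (mul_nonneg hdT hu0) hs0, mul_le_mul_of_nonneg_left hd_le hu0,
      mul_nonneg hd hs0]
  rw [OmegaSet, fmap_ptD_ofEigenvalues hs1 hsu.le, ptB_ofEigenvalues hs1 hu,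
    ptD_ofEigenvalues hsu.le]
  exact fixedPoint_mem_convexHull_triangle hs1 hsu hd (by linarith) hE hN

end

/-- Lemma 3.2 (key step): for any `ξ ∈ Φ_BYG`, the fixed point `X` lies in `Ω(ξ)`. -/
theorem fpX_mem_Omega (ξ : ℝ × ℝ × ℝ × ℝ) (hξ : ξ ∈ PhiBYG) :
    fpX ξ ∈ OmegaSet ξ := by
  obtain ⟨u, s, hs0, hs1, hu, hξ_eq⟩ := exists_eq_ofEigenvalues hξ.1
  obtain ⟨-, -, hT, hd⟩ := hξ.1
  rw [hξ_eq]
  exact fpX_mem_OmegaSet_ofEigenvalues hs0.le hs1 hu hT hd.le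

end
end

section
/- For any ξ ∈ Φ, φ(g(ξ)) = τ_R·(λ_R^u)²·ψ(ξ). -/
noncomputable section

/-- The unstable eigenvalue `λ_R^u` of `A_R`. -/
def lamRu (ξ : ℝ × ℝ × ℝ × ℝ) : ℝ := (ξ.2.2.1 - Real.sqrt (ξ.2.2.1 ^ 2 - 4 * ξ.2.2.2)) / 2

/-- The stable eigenvalue `λ_R^s` of `A_R`. -/
def lamRs (ξ : ℝ × ℝ × ℝ × ℝ) : ℝ := (ξ.2.2.1 + Real.sqrt (ξ.2.2.1 ^ 2 - 4 * ξ.2.2.2)) / 2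

/-- The function `ψ`. -/
def psiFn (ξ : ℝ × ℝ × ℝ × ℝ) : ℝ :=
  (ξ.1 * ξ.2.2.1 - ξ.2.2.2) * lamRu ξ + (ξ.2.1 / ξ.2.2.2 + ξ.2.1 - 1) * lamRs ξ
    - ξ.1 * (1 + ξ.2.2.2) + ξ.2.2.1 * (1 - ξ.2.1)

/-!
The map `g` replaces the left pair `(τ_L, δ_L)` by the trace and determinant of `A_R²`, whose
eigenvalues are `(λ_R^u)²` and `(λ_R^s)²`. Since `|λ_R^s| < |λ_R^u|`, the square root in `φ(g ξ)`
is `(λ_R^u)² - (λ_R^s)²`, and the larger root `(τ + √(τ² - 4δ))/2` it builds is `(λ_R^u)²`. After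
substituting `τ_R = λ_R^u + λ_R^s` and `δ_R = λ_R^u λ_R^s` both sides are rational functions of
the eigenvalues, `τ_L` and `δ_L`, and the identity is a field computation.
-/

theorem Real.sqrt_sq_add_sub_four_mul_of_le {a b : ℝ} (h : b ≤ a) :
    √((a + b) ^ 2 - 4 * (a * b)) = a - b := by
  rw [show (a + b) ^ 2 - 4 * (a * b) = (a - b) ^ 2 by ring]
  exact Real.sqrt_sq (sub_nonneg.2 h)

section Eigenvalues

variable {ξ : ℝ × ℝ × ℝ × ℝ}

theorem discr_pos_of_lt (hτ : ξ.2.2.1 < -(ξ.2.2.2 + 1)) (hδ : 0 < ξ.2.2.2) :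
    0 < ξ.2.2.1 ^ 2 - 4 * ξ.2.2.2 := by
  nlinarith [sq_nonneg (ξ.2.2.2 - 1)]

variable (ξ) in
theorem lamRu_add_lamRs : lamRu ξ + lamRs ξ = ξ.2.2.1 := by
  simp only [lamRu, lamRs]
  ring

theorem lamRu_mul_lamRs (h : 0 ≤ ξ.2.2.1 ^ 2 - 4 * ξ.2.2.2) : lamRu ξ * lamRs ξ = ξ.2.2.2 := by
  simp only [lamRu, lamRs]
  linear_combination (-1 / 4 : ℝ) * Real.sq_sqrt h

theorem sq_lamRs_le_sq_lamRu (h : ξ.2.2.1 ≤ 0) : lamRs ξ ^ 2 ≤ lamRu ξ ^ 2 := by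
  have hsq : lamRu ξ ^ 2 - lamRs ξ ^ 2 = -ξ.2.2.1 * √(ξ.2.2.1 ^ 2 - 4 * ξ.2.2.2) := by
    simp only [lamRu, lamRs]
    ring
  nlinarith [Real.sqrt_nonneg (ξ.2.2.1 ^ 2 - 4 * ξ.2.2.2)]

theorem sqrt_discr_gmap (h : 0 ≤ ξ.2.2.1 ^ 2 - 4 * ξ.2.2.2) (hτ : ξ.2.2.1 ≤ 0) :
    √((gmap ξ).1 ^ 2 - 4 * (gmap ξ).2.1) = lamRu ξ ^ 2 - lamRs ξ ^ 2 := by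
  have htrace : (gmap ξ).1 = lamRu ξ ^ 2 + lamRs ξ ^ 2 := by
    simp only [gmap, ← lamRu_add_lamRs ξ, ← lamRu_mul_lamRs h]
    ring
  have hdet : (gmap ξ).2.1 = lamRu ξ ^ 2 * lamRs ξ ^ 2 := by
    simp only [gmap, ← lamRu_mul_lamRs h]
    ring
  rw [htrace, hdet]
  exact Real.sqrt_sq_add_sub_four_mul_of_le (sq_lamRs_le_sq_lamRu hτ)

end Eigenvalues

/-- Lemma 4.2: for any `ξ ∈ Φ`, `φ(g(ξ)) = τ_R (λ_R^u)² ψ(ξ)`. -/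
theorem phi_g_eq_psi (ξ : ℝ × ℝ × ℝ × ℝ) (hξ : ξ ∈ PhiSet) :
    phiFn (gmap ξ) = ξ.2.2.1 * (lamRu ξ) ^ 2 * psiFn ξ := by
  obtain ⟨-, -, hτR, hδR⟩ := hξ
  have hdisc := (discr_pos_of_lt hτR hδR).le
  have hsqrt := sqrt_discr_gmap hdisc (by linarith)
  have hsum := lamRu_add_lamRs ξ
  have hprod := lamRu_mul_lamRs hdisc
  have hu : lamRu ξ ≠ 0 := left_ne_zero_of_mul (hprod ▸ hδR.ne')
  have hs : lamRs ξ ≠ 0 := right_ne_zero_of_mul (hprod ▸ hδR.ne')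
  rw [phiFn, hsqrt, psiFn]
  generalize lamRu ξ = u, lamRs ξ = s at *
  obtain ⟨τL, δL, τR, δR⟩ := ξ
  subst hsum hprod
  simp only [gmap]
  field_simp
  ring

end
end

section
/- If ξ ∈ Φ and δ_L ≥ 1 then φ(ξ) < 0. -/
noncomputable section

/-- Lemma 5.1: if `ξ ∈ Φ` and `δ_L ≥ 1` then `φ(ξ) < 0`. -/
theorem phi_neg_of_deltaL_ge_one (ξ : ℝ × ℝ × ℝ × ℝ) (hξ : ξ ∈ PhiSet)
    (hdL : 1 ≤ ξ.2.1) :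
    phiFn ξ < 0 := by
  obtain ⟨t, a, r, b⟩ := ξ
  obtain ⟨ht, ha, hr, hb⟩ := hξ
  simp only at ht ha hr hb hdL
  simp only [phiFn]
  set s : ℝ := Real.sqrt (t ^ 2 - 4 * a) with hs
  have hs0 : 0 ≤ s := Real.sqrt_nonneg _
  have hC : (1 + r) * t - r - a - b < 0 := by nlinarith
  nlinarith [mul_nonneg hs0 (le_of_lt (neg_pos.mpr hC)), mul_pos hb ha,
    mul_lt_mul_of_pos_right ht (show (0:ℝ) < b + 1 by linarith)]
end
end

section
/- Fix 0 < δ_L < 1 and δ_R > 0. For every τ_R ≤ -δ_R - 1 there exists a unique τ_L > δ_L + 1 such that φ(τ_L, δ_L, τ_R, δ_R) = 0. Writing this value as G(τ_R), the function G : (-∞, -δ_R - 1] → (δ_L + 1, ∞) is strictly increasing, G(τ_R) → δ_L + 1 as τ_R → -∞, and G(-δ_R - 1) = α + δ_L/α where α = ((1 - δ_L) + √((1 - δ_L)² + 4δ_R²))/(2δ_R) is the largest real solution of -δ_R·α² + (1 - δ_L)·α + δ_R = 0. -/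
/-!
Writing `τ_L = x + δ_L / x` with `x > 1` (a bijection of `(1, ∞)` onto `(δ_L + 1, ∞)`), the square
root in `φ` becomes `x - δ_L / x` and `φ` turns into the quadratic
`q_{τ_R}(x) = (1 + τ_R) x² - (τ_R + δ_L + δ_R) x + δ_R`.
For `τ_R < -1` its leading coefficient is negative while `q(0) = δ_R > 0` and `q(1) = 1 - δ_L > 0`,
so it has exactly one root `α(τ_R) > 1`, and `G = α + δ_L / α`. Raising `τ_R` to `τ_R'` adds
`(τ_R' - τ_R) x (x - 1) > 0` to `q`, so `α` is increasing; the same identity gives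
`α(τ_R) - 1 = O(1 / |τ_R|)`. At `τ_R = -δ_R - 1` the quadratic is `-δ_R x² + (1 - δ_L) x + δ_R`.
-/

noncomputable section

open Filter Topology Set

section PosRoot

variable {a b c x : ℝ}

/-- For `a < 0` this is the larger root of `a x² + b x + c`; it is positive when moreover `0 < c`. -/
def posRoot (a b c : ℝ) : ℝ := (-b - √(discrim a b c)) / (2 * a)

lemma quadratic_posRoot_eq_zero (ha : a ≠ 0) (hd : 0 ≤ discrim a b c) :
    a * (posRoot a b c * posRoot a b c) + b * posRoot a b c + c = 0 :=
  (quadratic_eq_zero_iff ha (Real.mul_self_sqrt hd).symm _).2 (Or.inr rfl)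

lemma discrim_eq_sq_sub_quadratic (a b c x : ℝ) :
    discrim a b c = (2 * a * x + b) ^ 2 - 4 * a * (a * (x * x) + b * x + c) := by
  rw [discrim]; ring

lemma le_posRoot_of_quadratic_nonneg (ha : a < 0) (hx : 0 ≤ a * (x * x) + b * x + c) :
    x ≤ posRoot a b c := by
  have hs : |2 * a * x + b| ≤ √(discrim a b c) :=
    Real.abs_le_sqrt (by rw [discrim_eq_sq_sub_quadratic a b c x]; nlinarith)
  rw [posRoot, le_div_iff_of_neg (by linarith)]
  linarith [neg_abs_le (2 * a * x + b)]

lemma lt_posRoot_of_quadratic_pos (ha : a < 0) (hx : 0 < a * (x * x) + b * x + c) :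
    x < posRoot a b c := by
  have hs : |2 * a * x + b| < √(discrim a b c) := by
    rw [Real.lt_sqrt (abs_nonneg _), sq_abs, discrim_eq_sq_sub_quadratic a b c x]
    nlinarith
  rw [posRoot, lt_div_iff_of_neg (by linarith)]
  linarith [neg_abs_le (2 * a * x + b)]

-- For `a < 0 ≤ c` the other root `(-b + √(discrim a b c)) / (2 * a)` is nonpositive.
lemma eq_posRoot_of_quadratic_eq_zero (ha : a < 0) (hc : 0 ≤ c) (hx₀ : 0 < x)
    (hx : a * (x * x) + b * x + c = 0) : x = posRoot a b c := by
  have hd : 0 ≤ discrim a b c := by rw [discrim]; nlinarith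
  rcases (quadratic_eq_zero_iff ha.ne (Real.mul_self_sqrt hd).symm x).1 hx with h | h
  · have hb : |b| ≤ √(discrim a b c) := Real.abs_le_sqrt (by rw [discrim]; nlinarith)
    have : x ≤ 0 := by
      rw [h]; exact div_nonpos_of_nonneg_of_nonpos (by linarith [le_abs_self b]) (by linarith)
    linarith
  · exact h

end PosRoot

section AddDiv

variable {c x y : ℝ}

lemma add_div_lt_add_div (hx : 0 < x) (hxy : x < y) (hc : c < x * y) : x + c / x < y + c / y := by
  have hy : 0 < y := hx.trans hxy
  have key : y + c / y - (x + c / x) = (y - x) * (x * y - c) / (x * y) := by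
    field_simp; ring
  have : 0 < (y - x) * (x * y - c) / (x * y) := by
    apply div_pos (mul_pos _ _) (mul_pos hx hy) <;> linarith
  linarith

lemma exists_one_lt_add_div_eq {τ : ℝ} (hτ : c + 1 < τ) : ∃ x, 1 < x ∧ x + c / x = τ := by
  have hd : (2 - τ) ^ 2 < τ ^ 2 - 4 * c := by nlinarith
  have hs : 2 - τ < √(τ ^ 2 - 4 * c) :=
    (le_abs_self _).trans_lt ((Real.lt_sqrt (abs_nonneg _)).2 (by rwa [sq_abs]))
  have hsq := Real.sq_sqrt (((sq_nonneg _).trans_lt hd).le)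
  refine ⟨(τ + √(τ ^ 2 - 4 * c)) / 2, by linarith, ?_⟩
  have hx : τ + √(τ ^ 2 - 4 * c) ≠ 0 := by linarith
  field_simp
  linear_combination hsq

lemma sqrt_add_div_sq_sub (hx : 0 < x) (hc : c ≤ x ^ 2) :
    √((x + c / x) ^ 2 - 4 * c) = x - c / x := by
  have hcx : c / x ≤ x := by rw [div_le_iff₀ hx]; nlinarith
  rw [show (x + c / x) ^ 2 - 4 * c = (x - c / x) ^ 2 by field_simp; ring,
    Real.sqrt_sq (by linarith)]

end AddDiv

lemma phiFn_add_div {dL t dR x : ℝ} (hx : 0 < x) (hdL : dL ≤ x ^ 2) :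
    phiFn (x + dL / x, dL, t, dR) = (1 + t) * (x * x) + -(t + dL + dR) * x + dR := by
  simp only [phiFn]
  rw [sqrt_add_div_sq_sub hx hdL]
  field_simp
  ring

namespace CurveG

variable {dL dR t : ℝ}

def alpha (dL dR t : ℝ) : ℝ := posRoot (1 + t) (-(t + dL + dR)) dR

lemma alpha_isRoot (hdR : 0 ≤ dR) (ht : t < -1) :
    (1 + t) * (alpha dL dR t * alpha dL dR t) + -(t + dL + dR) * alpha dL dR t + dR = 0 :=
  quadratic_posRoot_eq_zero (by linarith) (by rw [discrim]; nlinarith)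

lemma one_lt_alpha (hdL : dL < 1) (ht : t < -1) : 1 < alpha dL dR t :=
  lt_posRoot_of_quadratic_pos (by linarith) (by linarith)

lemma alpha_strictMonoOn (hdL : dL < 1) (hdR : 0 ≤ dR) :
    StrictMonoOn (alpha dL dR) (Iio (-1)) := by
  intro t ht t' ht' htt'
  have hα := one_lt_alpha (dR := dR) hdL ht
  apply lt_posRoot_of_quadratic_pos (by linarith [mem_Iio.1 ht'])
  -- the quadratic for `t'` exceeds the one for `t` by `(t' - t) α (α - 1)`
  nlinarith [alpha_isRoot (dL := dL) hdR ht,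
    mul_pos (sub_pos.2 htt') (mul_pos (by linarith) (sub_pos.2 hα))]

lemma exists_alpha_sub_one_le (hdL : dL < 1) (hdR : 0 ≤ dR) :
    ∃ K, ∀ t ≤ -2, alpha dL dR t - 1 ≤ K / -t := by
  set A := alpha dL dR (-2)
  refine ⟨A * A + |dL + dR| * A + dR, fun t ht => ?_⟩
  have ht1 : t < -1 := by linarith
  have hα := one_lt_alpha (dR := dR) hdL ht1
  have hαA : alpha dL dR t ≤ A :=
    (alpha_strictMonoOn hdL hdR).monotoneOn ht1 (show (-2 : ℝ) < -1 by norm_num) ht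
  set α := alpha dL dR t
  have hroot : -t * (α * (α - 1)) = α * α - (dL + dR) * α + dR := by
    linear_combination -alpha_isRoot (dL := dL) hdR ht1
  have hlin : -t * (α - 1) ≤ -t * (α * (α - 1)) := by
    nlinarith [mul_nonneg (by linarith : 0 ≤ -t) (sq_nonneg (α - 1))]
  have hsq : α * α ≤ A * A := by nlinarith
  have habs : -(dL + dR) * α ≤ |dL + dR| * A := by
    nlinarith [neg_abs_le (dL + dR), abs_nonneg (dL + dR)]
  rw [le_div_iff₀ (by linarith)]
  linarith

lemma tendsto_alpha_atBot (hdL : dL < 1) (hdR : 0 ≤ dR) :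
    Tendsto (alpha dL dR) atBot (𝓝 1) := by
  obtain ⟨K, hK⟩ := exists_alpha_sub_one_le hdL hdR
  have hup : Tendsto (fun t : ℝ => 1 + K * (-t)⁻¹) atBot (𝓝 1) := by
    simpa using ((tendsto_inv_atTop_zero.comp tendsto_neg_atBot_atTop).const_mul K).const_add 1
  refine tendsto_of_tendsto_of_tendsto_of_le_of_le' tendsto_const_nhds hup ?_ ?_ <;>
    filter_upwards [eventually_le_atBot (-2 : ℝ)] with t ht
  · exact (one_lt_alpha hdL (by linarith)).le
  · linarith [hK t ht, div_eq_mul_inv K (-t)]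

lemma alpha_neg_sub_one : alpha dL dR (-dR - 1) = posRoot (-dR) (1 - dL) dR := by
  rw [alpha]; congr 1 <;> ring

end CurveG

open CurveG in
theorem curve_G_general (dL dR : ℝ) (h1 : dL < 1) (h2 : 0 < dR) :
    ∃ G : ℝ → ℝ,
      (∀ tR : ℝ, tR ≤ -dR - 1 →
        dL + 1 < G tR ∧ phiFn (G tR, dL, tR, dR) = 0 ∧
          ∀ tL : ℝ, dL + 1 < tL → phiFn (tL, dL, tR, dR) = 0 → tL = G tR) ∧
      (∀ tR tR' : ℝ, tR < tR' → tR' ≤ -dR - 1 → G tR < G tR') ∧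
      Filter.Tendsto G Filter.atBot (nhds (dL + 1)) ∧
      (∃ α : ℝ, α = ((1 - dL) + Real.sqrt ((1 - dL) ^ 2 + 4 * dR ^ 2)) / (2 * dR) ∧
        -dR * α ^ 2 + (1 - dL) * α + dR = 0 ∧
        (∀ a : ℝ, -dR * a ^ 2 + (1 - dL) * a + dR = 0 → a ≤ α) ∧
        G (-dR - 1) = α + dL / α) := by
  refine ⟨fun t => alpha dL dR t + dL / alpha dL dR t, fun t ht => ?_, fun t t' htt' ht' => ?_,
    ?_, ?_⟩
  · have ht1 : t < -1 := by linarith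
    have hα := one_lt_alpha (dR := dR) h1 ht1
    refine ⟨by simpa [add_comm] using add_div_lt_add_div (c := dL) one_pos hα (by linarith), ?_,
      fun tL htL hφ => ?_⟩
    · rw [phiFn_add_div (by linarith) (by nlinarith)]
      exact alpha_isRoot h2.le ht1
    · obtain ⟨x, hx, rfl⟩ := exists_one_lt_add_div_eq htL
      rw [phiFn_add_div (by linarith) (by nlinarith)] at hφ
      rw [eq_posRoot_of_quadratic_eq_zero (by linarith) h2.le (by linarith) hφ]
      rfl
  · have hα := one_lt_alpha (dR := dR) h1 (by linarith : t < -1)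
    have hαα' := alpha_strictMonoOn h1 h2.le (mem_Iio.2 (by linarith))
      (mem_Iio.2 (by linarith)) htt'
    exact add_div_lt_add_div (by linarith) hαα' (by nlinarith)
  · have hG : ContinuousAt (fun x : ℝ => x + dL / x) 1 := by fun_prop (disch := norm_num)
    have := hG.tendsto.comp (tendsto_alpha_atBot h1 h2.le)
    rwa [div_one, add_comm 1] at this
  · refine ⟨posRoot (-dR) (1 - dL) dR, ?_, ?_, fun a ha => ?_,
      congrArg (fun x => x + dL / x) alpha_neg_sub_one⟩
    · rw [posRoot, discrim, show (1 - dL) ^ 2 - 4 * -dR * dR = (1 - dL) ^ 2 + 4 * dR ^ 2 by ring]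
      field_simp
      ring
    · linear_combination quadratic_posRoot_eq_zero (a := -dR) (b := 1 - dL) (c := dR)
        (by linarith) (by rw [discrim]; nlinarith)
    · exact le_posRoot_of_quadratic_nonneg (by linarith) (le_of_eq (by linear_combination -ha))

/-- Proposition 5.2: for `0 < δ_L < 1` and `δ_R > 0` there is a function `G` on
`(-∞, -δ_R-1]` giving the unique `τ_L > δ_L + 1` with `φ = 0`; `G` is strictly increasing,
tends to `δ_L + 1` as `τ_R → -∞`, and `G(-δ_R-1) = α + δ_L/α` where `α` is the largest
solution of `-δ_R α² + (1-δ_L) α + δ_R = 0`. -/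
theorem curve_G (dL dR : ℝ) (h0 : 0 < dL) (h1 : dL < 1) (h2 : 0 < dR) :
    ∃ G : ℝ → ℝ,
      (∀ tR : ℝ, tR ≤ -dR - 1 →
        dL + 1 < G tR ∧ phiFn (G tR, dL, tR, dR) = 0 ∧
          ∀ tL : ℝ, dL + 1 < tL → phiFn (tL, dL, tR, dR) = 0 → tL = G tR) ∧
      (∀ tR tR' : ℝ, tR < tR' → tR' ≤ -dR - 1 → G tR < G tR') ∧
      Filter.Tendsto G Filter.atBot (nhds (dL + 1)) ∧
      (∃ α : ℝ, α = ((1 - dL) + Real.sqrt ((1 - dL) ^ 2 + 4 * dR ^ 2)) / (2 * dR) ∧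
        -dR * α ^ 2 + (1 - dL) * α + dR = 0 ∧
        (∀ a : ℝ, -dR * a ^ 2 + (1 - dL) * a + dR = 0 → a ≤ α) ∧
        G (-dR - 1) = α + dL / α) :=
  curve_G_general dL dR h1 h2

end
end

section
/- Let δ_L > 0 and 0 < δ_R < 1, and let β ∈ ℝ satisfy β < -1 and p(β) = 0 (in particular, this holds for the smallest real root of p). Then β > -(1 + √5)/2 and β + δ_R/β > -2. -/
noncomputable section

/-- Lemma 5.5: for `δ_L > 0`, `0 < δ_R < 1`, and `β < -1` with
`(1+δ_L)β³ + (1-δ_L-δ_R)β² - (1+δ_L)β + δ_L = 0`, one has `β > -(1+√5)/2`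
and `β + δ_R/β > -2`. -/
theorem beta_bounds (dL dR β : ℝ) (h0 : 0 < dL) (h1 : 0 < dR) (h2 : dR < 1)
    (hβ : β < -1)
    (hroot : (1 + dL) * β ^ 3 + (1 - dL - dR) * β ^ 2 - (1 + dL) * β + dL = 0) :
    -(1 + Real.sqrt 5) / 2 < β ∧ -2 < β + dR / β := by
  have hb0 : β < 0 := by linarith
  have hbne : β ≠ 0 := ne_of_lt hb0
  have key : dL * (β - 1) ^ 2 * (β + 1) = dR * β ^ 2 - β * (β ^ 2 + β - 1) := by
    linear_combination hroot
  have hsq : (0:ℝ) < (β - 1) ^ 2 := by nlinarith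
  have hneg : dL * (β - 1) ^ 2 * (β + 1) < 0 :=
    mul_neg_of_pos_of_neg (mul_pos h0 hsq) (by linarith)
  have hneg' : dR * β ^ 2 - β * (β ^ 2 + β - 1) < 0 := key ▸ hneg
  have hbsq : (0:ℝ) < β ^ 2 := by positivity
  have hq : β ^ 2 + β - 1 < 0 := by nlinarith [mul_pos h1 hbsq]
  have hs : Real.sqrt 5 ^ 2 = 5 := Real.sq_sqrt (by norm_num)
  have hs0 : (0:ℝ) ≤ Real.sqrt 5 := Real.sqrt_nonneg 5
  constructor
  · nlinarith [sq_nonneg (2 * β + 1 + Real.sqrt 5)]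
  · have hcube : β ^ 3 + 3 * β ^ 2 + β - 1 > 0 := by
      nlinarith [mul_pos_of_neg_of_neg (show β + 1 < 0 by linarith)
        (show β ^ 2 + 2 * β - 1 < 0 by linarith)]
    have h4 : β * (β ^ 3 + 3 * β ^ 2 + β - 1) < 0 := mul_neg_of_neg_of_pos hb0 hcube
    have hnum : β ^ 2 + 2 * β + dR < 0 := by nlinarith [sq_nonneg β]
    have heq : β + dR / β + 2 = (β ^ 2 + 2 * β + dR) / β := by
      field_simp; ring
    have : 0 < (β ^ 2 + 2 * β + dR) / β := div_pos_of_neg_of_neg hnum hb0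
    linarith [heq ▸ this]

end
end
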